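/- There exist R₀ > 0 and C > 0 (depending only on c and N) such that if R ≥ R₀, then for every integer k ≥ 1 and every z with 4R_k ≤ |z| ≤ R_{k+1}/4, one can write f(z) = −C_k · (z/R_k)^{2n_k} · (1 + δ_k(z)) where |δ_k(z)| ≤ C·(R_k^{−1} + 4^{−n_k}). -/

import Mathlib

open Complex

noncomputable section

/-- `f₀(z) = z² + c` iterated `N` times. -/
def f0iter (c : ℂ) (N : ℕ) (z : ℂ) : ℂ := (fun w => w ^ 2 + c)^[N] z

/-- `n_k = 2^(N + k - 1)`. -/
def nseq (N k : ℕ) : ℕ := 2 ^ (N + k - 1)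

/-- The radii `R_k`: `R₁ = 2R`, `R_{k+1} = max {|f_k(z)| : |z| = 2 R_k}` where
`f_k(z) = f₀^N(z) · ∏_{j=1}^k (1 - (1/2)(z/R_j)^{n_j})`. -/
def Rseq (c : ℂ) (N : ℕ) (R : ℝ) : ℕ → ℝ
  | 0 => R
  | 1 => 2 * R
  | k + 2 =>
      sSup ((fun z => ‖(f0iter c N z *
        ∏ j ∈ (Finset.Icc 1 (k + 1)).attach,
          (1 - (1 / 2) * (z / ((Rseq c N R j.1 : ℝ) : ℂ)) ^ nseq N j.1))‖) ''
        Metric.sphere (0 : ℂ) (2 * Rseq c N R (k + 1)))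
  decreasing_by
  · have := j.2; simp only [Finset.mem_Icc] at this; omega
  · omega

/-- `F_k(z) = 1 - (1/2)(z/R_k)^{n_k}`. -/
def Fseq (c : ℂ) (N : ℕ) (R : ℝ) (k : ℕ) (z : ℂ) : ℂ :=
  1 - (1 / 2) * (z / ((Rseq c N R k : ℝ) : ℂ)) ^ nseq N k

/-- The partial product `f_k(z) = f₀^N(z) · ∏_{j=1}^k F_j(z)`. -/
def fseq (c : ℂ) (N : ℕ) (R : ℝ) (k : ℕ) (z : ℂ) : ℂ :=
  f0iter c N z * ∏ j ∈ Finset.Icc 1 k, Fseq c N R j z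

/-- The infinite product `f(z) = f₀^N(z) · ∏_{k=1}^∞ F_k(z)`. -/
def flim (c : ℂ) (N : ℕ) (R : ℝ) (z : ℂ) : ℂ :=
  f0iter c N z * ∏' k : ℕ, Fseq c N R (k + 1) z

/-- The standing assumption `1/2 ≤ |f₀^N(z)|/|z|^{2^N} ≤ 2` for `|z| ≥ R`. -/
def OneBound (c : ℂ) (N : ℕ) (R : ℝ) : Prop :=
  ∀ z : ℂ, R ≤ ‖z‖ →
    1 / 2 ≤ ‖f0iter c N z‖ / ‖z‖ ^ 2 ^ N ∧
    ‖f0iter c N z‖ / ‖z‖ ^ 2 ^ N ≤ 2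

/-- `C₁ = R₁^{n₁}/2`, and for `k ≥ 2`,
`C_k = (-1)^{k-1} 2^{-k} R_k^{n_k} ∏_{j=1}^{k-1} R_j^{-n_j}`. -/
def Cseq (c : ℂ) (N : ℕ) (R : ℝ) (k : ℕ) : ℝ :=
  (-1) ^ (k - 1) * Rseq c N R k ^ nseq N k /
    (2 ^ k * ∏ j ∈ Finset.Icc 1 (k - 1), Rseq c N R j ^ nseq N j)

/-!
On `4 R_k ≤ |z| ≤ R_{k+1}/4` each factor `F_j` with `j ≤ k` is dominated by its monomial
`-(1/2) (z/R_j)^{n_j}`, each factor with `j > k` is close to `1`, and `f₀^N(z)` is close to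
`z^{2^N}`. Since `2^N + n_1 + ⋯ + n_k = 2 n_k`, the product of the monomials is exactly
`-C_k (z/R_k)^{2 n_k}`. The relative errors are `O(1/|z|)` for `f₀^N`,
`∑_{j<k} (R_j/|z|)^{n_j} = O(1/R_k)` because the radii grow like `R_{j+1} ≥ R_j^{2^N}`,
`(R_k/|z|)^{n_k} ≤ 4^{-n_k}`, and a geometric tail bounded by `4^{-n_k}`; they combine through
`|∏ (1 + u_i) - 1| ≤ exp (∑ |u_i|) - 1`.
-/

theorem exp_sub_one_le_two_mul {x : ℝ} (h0 : 0 ≤ x) (h1 : x ≤ 1) :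
    Real.exp x - 1 ≤ 2 * x := by
  have := Real.abs_exp_sub_one_le (abs_le.2 ⟨by linarith, h1⟩)
  rw [abs_of_nonneg h0] at this
  exact (le_abs_self _).trans this

section InfiniteProduct

variable {ι R : Type*} [NormedCommRing R]

theorem norm_mul_sub_one_le_exp {a b : R} {x y : ℝ}
    (ha : ‖a - 1‖ ≤ Real.exp x - 1) (hb : ‖b - 1‖ ≤ Real.exp y - 1) :
    ‖a * b - 1‖ ≤ Real.exp (x + y) - 1 := by
  have hab : a * b - 1 = (a - 1) * (b - 1) + (a - 1) + (b - 1) := by ring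
  have hx : 0 ≤ Real.exp x - 1 := (norm_nonneg _).trans ha
  calc ‖a * b - 1‖ ≤ ‖a - 1‖ * ‖b - 1‖ + ‖a - 1‖ + ‖b - 1‖ := by
        rw [hab]
        exact (norm_add₃_le ..).trans (by gcongr; exact norm_mul_le _ _)
    _ ≤ (Real.exp x - 1) * (Real.exp y - 1) + (Real.exp x - 1) + (Real.exp y - 1) := by
        gcongr
    _ = Real.exp (x + y) - 1 := by rw [Real.exp_add]; ring

theorem norm_tprod_one_add_sub_one_le [NormOneClass R] [CompleteSpace R] {f : ι → R}
    (hf : Summable fun i ↦ ‖f i‖) :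
    ‖∏' i, (1 + f i) - 1‖ ≤ Real.exp (∑' i, ‖f i‖) - 1 := by
  have hprod := (multipliable_one_add_of_summable hf).hasProd
  refine le_of_tendsto ((hprod.sub_const 1).norm) (Filter.Eventually.of_forall fun s ↦ ?_)
  refine (s.norm_prod_one_add_sub_one_le f).trans ?_
  gcongr
  exact hf.sum_le_tsum s fun i _ ↦ norm_nonneg _

end InfiniteProduct

theorem exists_norm_f0iter_div_pow_sub_one_le (c : ℂ) (N : ℕ) :
    ∃ A, 0 ≤ A ∧
      ∀ z : ℂ, 1 ≤ ‖z‖ → ‖f0iter c N z / z ^ 2 ^ N - 1‖ ≤ A / ‖z‖ := by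
  induction N with
  | zero =>
    refine ⟨0, le_rfl, fun z hz ↦ ?_⟩
    have hz0 : z ≠ 0 := norm_pos_iff.1 (by linarith)
    simp [f0iter, hz0]
  | succ n ih =>
    obtain ⟨a, ha0, ha⟩ := ih
    refine ⟨a * (a + 2) + ‖c‖, by positivity, fun z hz ↦ ?_⟩
    have hz0 : z ≠ 0 := norm_pos_iff.1 (by linarith)
    set w := f0iter c n z / z ^ 2 ^ n
    have hw : ‖w - 1‖ ≤ a / ‖z‖ := ha z hz
    have hsucc : f0iter c (n + 1) z / z ^ 2 ^ (n + 1) - 1 =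
        (w - 1) * (w - 1 + 2) + c / z ^ 2 ^ (n + 1) := by
      simp only [w, f0iter, Function.iterate_succ_apply', pow_succ, pow_mul]
      field_simp
      ring
    have hc : ‖c / z ^ 2 ^ (n + 1)‖ ≤ ‖c‖ / ‖z‖ := by
      rw [norm_div, norm_pow]
      gcongr
      exact le_self_pow₀ hz (by positivity)
    have hw2 : ‖w - 1 + 2‖ ≤ a + 2 := (norm_add_le _ _).trans <| by
      rw [Complex.norm_two]
      linarith [div_le_self ha0 hz]
    rw [hsucc]
    calc _ ≤ ‖w - 1‖ * ‖w - 1 + 2‖ + ‖c‖ / ‖z‖ :=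
          (norm_add_le _ _).trans (by rw [norm_mul]; gcongr)
      _ ≤ a / ‖z‖ * (a + 2) + ‖c‖ / ‖z‖ := by gcongr
      _ = _ := by ring

section Exponents

theorem nseq_succ {N k : ℕ} (h : 1 ≤ N + k) : nseq N (k + 1) = 2 * nseq N k := by
  rw [nseq, nseq, ← pow_succ']
  congr 1
  omega

theorem two_pow_add_sum_nseq {N : ℕ} (hN : 1 ≤ N) (k : ℕ) :
    2 ^ N + ∑ j ∈ Finset.Icc 1 k, nseq N j = 2 * nseq N k := by
  induction k with
  | zero =>
    simp [nseq, ← pow_succ']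
    omega
  | succ k ih =>
    rw [Finset.sum_Icc_succ_top (by omega), ← add_assoc, ih, nseq_succ (by omega)]
    ring

theorem nseq_eq_two_pow_mul {N j : ℕ} (hj : 1 ≤ j) : nseq N j = 2 ^ N * 2 ^ (j - 1) := by
  rw [nseq, ← pow_add]
  congr 1
  omega

theorem two_pow_pred_add_le_nseq {N j : ℕ} (hN : 2 ≤ N) (hj : 1 ≤ j) :
    2 ^ (j - 1) + j + 1 ≤ nseq N j := by
  have h1 : j < 2 ^ j := Nat.lt_two_pow_self
  have h2 : 2 ^ j = 2 * 2 ^ (j - 1) := by rw [← pow_succ']; congr 1; omega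
  have h3 : 4 * 2 ^ (j - 1) ≤ nseq N j := by
    rw [nseq_eq_two_pow_mul hj]
    gcongr
    calc 4 = 2 ^ 2 := rfl
      _ ≤ 2 ^ N := Nat.pow_le_pow_right two_pos hN
  omega

theorem nseq_add_le_nseq {N k : ℕ} (hk : 1 ≤ k) (i : ℕ) :
    nseq N k + i + 1 ≤ nseq N (i + k + 1) := by
  have h1 : nseq N (i + k + 1) = 2 ^ (i + 1) * nseq N k := by
    rw [nseq, nseq, ← pow_add]
    congr 1
    omega
  have h2 : i + 2 ≤ 2 ^ (i + 1) := Nat.lt_two_pow_self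
  have h3 : 1 ≤ nseq N k := Nat.one_le_two_pow
  rw [h1]
  nlinarith

end Exponents

section Radii

variable {c : ℂ} {N : ℕ} {R : ℝ}

theorem Rseq_one : Rseq c N R 1 = 2 * R := by rw [Rseq]

theorem Rseq_add_two (m : ℕ) :
    Rseq c N R (m + 2) =
      sSup ((‖fseq c N R (m + 1) ·‖) '' Metric.sphere 0 (2 * Rseq c N R (m + 1))) := by
  rw [Rseq]
  congr 2
  funext z
  rw [fseq, ← Finset.prod_attach (Finset.Icc 1 (m + 1))]
  rfl

theorem continuous_f0iter (c : ℂ) (N : ℕ) : Continuous (f0iter c N) :=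
  (by fun_prop : Continuous fun w : ℂ ↦ w ^ 2 + c).iterate N

theorem continuous_fseq (c : ℂ) (N : ℕ) (R : ℝ) (k : ℕ) : Continuous (fseq c N R k) := by
  unfold fseq Fseq
  have := continuous_f0iter c N
  fun_prop

theorem norm_Fseq_sub_one {j : ℕ} (hj : 0 < Rseq c N R j) (z : ℂ) :
    ‖Fseq c N R j z - 1‖ = (‖z‖ / Rseq c N R j) ^ nseq N j / 2 := by
  simp only [Fseq, sub_sub_cancel_left, norm_neg, norm_mul, norm_pow, norm_div,
    Complex.norm_real, Real.norm_of_nonneg hj.le]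
  norm_num
  ring

/-- The radius `R_{k+1}` is at least `|f_k|` at the positive real point `2 R_k`, where every
factor `F_j` has modulus at least `1`. -/
theorem Rseq_pow_le_Rseq_succ_of_forall (hN : 1 ≤ N) (hR : 0 < R) (hOB : OneBound c N R)
    {k : ℕ} (hk : 1 ≤ k)
    (hRj : ∀ j ∈ Finset.Icc 1 k, R ≤ Rseq c N R j ∧ Rseq c N R j ≤ Rseq c N R k) :
    Rseq c N R k ^ 2 ^ N ≤ Rseq c N R (k + 1) := by
  obtain ⟨m, rfl⟩ : ∃ m, k = m + 1 := ⟨k - 1, by omega⟩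
  set r := Rseq c N R (m + 1)
  have hRr : R ≤ r := (hRj (m + 1) (by simp)).1
  have hr : 0 < r := hR.trans_le hRr
  set z₀ : ℂ := ((2 * r : ℝ) : ℂ)
  have hz₀ : ‖z₀‖ = 2 * r := by simp [z₀, abs_of_pos hr]
  have hFj : ∀ j ∈ Finset.Icc 1 (m + 1), 1 ≤ ‖Fseq c N R j z₀‖ := by
    intro j hj
    have hRj0 : 0 < Rseq c N R j := hR.trans_le (hRj j hj).1
    have h2 : 2 ≤ ‖z₀‖ / Rseq c N R j := by
      rw [hz₀, le_div_iff₀ hRj0]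
      linarith [(hRj j hj).2]
    have hn : 2 ≤ nseq N j := by
      calc 2 = 2 ^ 1 := rfl
        _ ≤ nseq N j := Nat.pow_le_pow_right two_pos (by simp at hj; omega)
    have h4 : 4 ≤ (‖z₀‖ / Rseq c N R j) ^ nseq N j :=
      calc (4 : ℝ) = 2 ^ 2 := by norm_num
        _ ≤ 2 ^ nseq N j := pow_le_pow_right₀ one_le_two hn
        _ ≤ _ := by gcongr
    have := norm_sub_norm_le (Fseq c N R j z₀ - 1) (-1)
    rw [sub_neg_eq_add, sub_add_cancel, norm_Fseq_sub_one hRj0, norm_neg, norm_one] at this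
    linarith
  have hlow : r ^ 2 ^ N ≤ ‖fseq c N R (m + 1) z₀‖ := by
    have hf0 := (hOB z₀ (by rw [hz₀]; linarith)).1
    rw [hz₀, le_div_iff₀ (by positivity)] at hf0
    have hprod : 1 ≤ ∏ j ∈ Finset.Icc 1 (m + 1), ‖Fseq c N R j z₀‖ :=
      Finset.one_le_prod hFj
    have h2 : (2 : ℝ) ≤ 2 ^ 2 ^ N := le_self_pow₀ one_le_two (by positivity)
    calc r ^ 2 ^ N ≤ 1 / 2 * (2 * r) ^ 2 ^ N := by rw [mul_pow]; nlinarith [pow_pos hr (2 ^ N)]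
      _ ≤ ‖f0iter c N z₀‖ := hf0
      _ ≤ ‖fseq c N R (m + 1) z₀‖ := by
        rw [fseq, norm_mul, norm_prod]
        exact le_mul_of_one_le_right (norm_nonneg _) hprod
  have hbdd := (isCompact_sphere (0 : ℂ) (2 * r)).bddAbove_image
    (continuous_fseq c N R (m + 1)).norm.continuousOn
  rw [Rseq_add_two]
  exact hlow.trans (le_csSup hbdd ⟨z₀, by rw [mem_sphere_zero_iff_norm, hz₀], rfl⟩)

theorem le_Rseq_and_Rseq_le (hN : 1 ≤ N) (hR : 1 ≤ R) (hOB : OneBound c N R) (k : ℕ) :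
    ∀ j ∈ Finset.Icc 1 (k + 1), R ≤ Rseq c N R j ∧ Rseq c N R j ≤ Rseq c N R (k + 1) := by
  induction k with
  | zero =>
    intro j hj
    obtain rfl : j = 1 := by simp at hj; omega
    rw [Rseq_one]
    constructor <;> linarith
  | succ k ih =>
    have hstep := Rseq_pow_le_Rseq_succ_of_forall hN (by linarith) hOB (by omega) ih
    have hRk : 1 ≤ Rseq c N R (k + 1) := hR.trans (ih (k + 1) (by simp)).1
    have hle : Rseq c N R (k + 1) ≤ Rseq c N R (k + 2) :=
      (le_self_pow₀ hRk (by positivity)).trans hstep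
    intro j hj
    rcases (Finset.mem_Icc.1 hj).2.lt_or_eq with hj' | rfl
    · obtain ⟨h1, h2⟩ := ih j (by simp at hj ⊢; omega)
      exact ⟨h1, h2.trans hle⟩
    · exact ⟨(ih (k + 1) (by simp)).1.trans hle, le_rfl⟩

theorem le_Rseq (hN : 1 ≤ N) (hR : 1 ≤ R) (hOB : OneBound c N R) {k : ℕ} (hk : 1 ≤ k) :
    R ≤ Rseq c N R k := by
  obtain ⟨m, rfl⟩ : ∃ m, k = m + 1 := ⟨k - 1, by omega⟩
  exact (le_Rseq_and_Rseq_le hN hR hOB m (m + 1) (by simp)).1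

theorem Rseq_pos (hN : 1 ≤ N) (hR : 1 ≤ R) (hOB : OneBound c N R) {k : ℕ} (hk : 1 ≤ k) :
    0 < Rseq c N R k :=
  zero_lt_one.trans_le (hR.trans (le_Rseq hN hR hOB hk))

theorem Rseq_mono (hN : 1 ≤ N) (hR : 1 ≤ R) (hOB : OneBound c N R) {a b : ℕ} (ha : 1 ≤ a)
    (hab : a ≤ b) : Rseq c N R a ≤ Rseq c N R b := by
  obtain ⟨m, rfl⟩ : ∃ m, b = m + 1 := ⟨b - 1, by omega⟩
  exact (le_Rseq_and_Rseq_le hN hR hOB m a (by simp; omega)).2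

theorem Rseq_pow_le_Rseq_succ (hN : 1 ≤ N) (hR : 1 ≤ R) (hOB : OneBound c N R) {k : ℕ}
    (hk : 1 ≤ k) : Rseq c N R k ^ 2 ^ N ≤ Rseq c N R (k + 1) :=
  Rseq_pow_le_Rseq_succ_of_forall hN (by linarith) hOB hk fun j hj ↦
    ⟨le_Rseq hN hR hOB (Finset.mem_Icc.1 hj).1,
      Rseq_mono hN hR hOB (Finset.mem_Icc.1 hj).1 (Finset.mem_Icc.1 hj).2⟩

end Radii

section Estimates

variable {c : ℂ} {N : ℕ} {R : ℝ}

/-- Superexponential growth: `R_j^{n_j} ≤ R_{j+1}^{2^{j-1}} ≤ R_k^{2^{j-1}}`, while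
`R_k^{n_j} ≥ R_k^{2^{j-1}} R_k^{j+1}`. -/
theorem Rseq_div_pow_nseq_le (hN : 2 ≤ N) (hR : 2 ≤ R) (hOB : OneBound c N R) {j k : ℕ}
    (hj : 1 ≤ j) (hjk : j < k) {r : ℝ} (hr : Rseq c N R k ≤ r) :
    (Rseq c N R j / r) ^ nseq N j ≤ (2 ^ j)⁻¹ * (Rseq c N R k)⁻¹ := by
  have hN1 : 1 ≤ N := by omega
  set rj := Rseq c N R j
  set rk := Rseq c N R k
  have hrj : 2 ≤ rj := hR.trans (le_Rseq hN1 (by linarith) hOB hj)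
  have hrk : 2 ≤ rk := hR.trans (le_Rseq hN1 (by linarith) hOB (by omega))
  have hA : rj ^ nseq N j ≤ rk ^ 2 ^ (j - 1) := by
    rw [nseq_eq_two_pow_mul hj, pow_mul]
    gcongr
    exact (Rseq_pow_le_Rseq_succ hN1 (by linarith) hOB hj).trans
      (Rseq_mono hN1 (by linarith) hOB (by omega) hjk)
  have hB : rj ^ nseq N j * (2 ^ j * rk) ≤ rk ^ nseq N j :=
    calc rj ^ nseq N j * (2 ^ j * rk) ≤ rk ^ 2 ^ (j - 1) * (rk ^ j * rk) := by gcongr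
      _ = rk ^ (2 ^ (j - 1) + j + 1) := by ring
      _ ≤ rk ^ nseq N j := pow_le_pow_right₀ (by linarith) (two_pow_pred_add_le_nseq hN hj)
  calc (rj / r) ^ nseq N j ≤ (rj / rk) ^ nseq N j :=
        pow_le_pow_left₀ (div_nonneg (by linarith) (by linarith))
          (div_le_div_of_nonneg_left (by linarith) (by linarith) hr) _
    _ = rj ^ nseq N j / rk ^ nseq N j := div_pow ..
    _ ≤ (2 ^ j)⁻¹ * rk⁻¹ := by
      rw [div_le_iff₀ (by positivity), ← mul_inv, inv_mul_eq_div, le_div_iff₀ (by positivity)]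
      exact hB

theorem sum_Rseq_div_pow_nseq_le (hN : 2 ≤ N) (hR : 2 ≤ R) (hOB : OneBound c N R) {k : ℕ}
    (hk : 1 ≤ k) {r : ℝ} (hr : 4 * Rseq c N R k ≤ r) :
    ∑ j ∈ Finset.Icc 1 k, (Rseq c N R j / r) ^ nseq N j ≤
      (Rseq c N R k)⁻¹ + ((4 : ℝ) ^ nseq N k)⁻¹ := by
  obtain ⟨m, rfl⟩ : ∃ m, k = m + 1 := ⟨k - 1, by omega⟩
  have hrk : 0 < Rseq c N R (m + 1) := Rseq_pos (by omega) (by linarith) hOB hk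
  have hinit :
      ∑ j ∈ Finset.Icc 1 m, (Rseq c N R j / r) ^ nseq N j ≤ (Rseq c N R (m + 1))⁻¹ :=
    calc ∑ j ∈ Finset.Icc 1 m, (Rseq c N R j / r) ^ nseq N j
        ≤ ∑ j ∈ Finset.Ico 1 (m + 1), (2⁻¹ : ℝ) ^ j * (Rseq c N R (m + 1))⁻¹ := by
          refine Finset.sum_le_sum fun j hj ↦ ?_
          rw [Finset.mem_Icc] at hj
          rw [inv_pow]
          exact Rseq_div_pow_nseq_le hN hR hOB hj.1 (by omega) (by linarith)
      _ = (∑ j ∈ Finset.Ico 1 (m + 1), (2⁻¹ : ℝ) ^ j) * (Rseq c N R (m + 1))⁻¹ :=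
          (Finset.sum_mul ..).symm
      _ ≤ 1 * (Rseq c N R (m + 1))⁻¹ := by
          gcongr
          exact (geom_sum_Ico_le_of_lt_one (by norm_num) (by norm_num)).trans (by norm_num)
      _ = _ := one_mul _
  have hlast : (Rseq c N R (m + 1) / r) ^ nseq N (m + 1) ≤ ((4 : ℝ) ^ nseq N (m + 1))⁻¹ := by
    rw [← inv_pow]
    refine pow_le_pow_left₀ (div_nonneg hrk.le (by linarith)) ?_ _
    rw [div_le_iff₀ (by linarith)]
    linarith
  rw [Finset.sum_Icc_succ_top (by omega)]
  exact add_le_add hinit hlast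

theorem exists_hasProd_Fseq_tail (hN : 1 ≤ N) (hR : 1 ≤ R) (hOB : OneBound c N R) {k : ℕ}
    (hk : 1 ≤ k) {z : ℂ} (hz : ‖z‖ ≤ Rseq c N R (k + 1) / 4) :
    ∃ T, HasProd (fun i ↦ Fseq c N R (i + k + 1) z) T ∧
      ‖T - 1‖ ≤ Real.exp ((4 : ℝ) ^ nseq N k)⁻¹ - 1 := by
  set u : ℕ → ℂ := fun i ↦ Fseq c N R (i + k + 1) z - 1
  have hu : ∀ i, ‖u i‖ ≤ ((4 : ℝ) ^ nseq N k)⁻¹ / 2 / 2 ^ i := by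
    intro i
    have hRi : Rseq c N R (k + 1) ≤ Rseq c N R (i + k + 1) :=
      Rseq_mono hN hR hOB (by omega) (by omega)
    have hRi0 : 0 < Rseq c N R (i + k + 1) := Rseq_pos hN hR hOB (by omega)
    have hratio : ‖z‖ / Rseq c N R (i + k + 1) ≤ 4⁻¹ := by
      rw [div_le_iff₀ hRi0]
      linarith
    calc ‖u i‖ = (‖z‖ / Rseq c N R (i + k + 1)) ^ nseq N (i + k + 1) / 2 :=
          norm_Fseq_sub_one hRi0 z
      _ ≤ (4⁻¹ : ℝ) ^ (nseq N k + i + 1) / 2 := by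
          gcongr ?_ / 2
          exact (pow_le_pow_left₀ (by positivity) hratio _).trans
            (pow_le_pow_of_le_one (by norm_num) (by norm_num) (nseq_add_le_nseq hk i))
      _ ≤ ((4 : ℝ) ^ nseq N k)⁻¹ / 2 / 2 ^ i := by
          rw [pow_succ, pow_add, inv_pow, inv_pow]
          have : (2 : ℝ) ^ i ≤ 4 ^ i := pow_le_pow_left₀ (by norm_num) (by norm_num) i
          field_simp
          nlinarith [pow_pos (two_pos : (0 : ℝ) < 2) i,
            pow_pos (by norm_num : (0 : ℝ) < 4) (nseq N k)]
  have hsum : Summable fun i ↦ ‖u i‖ :=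
    (summable_geometric_two' _).of_nonneg_of_le (fun i ↦ norm_nonneg _) hu
  have htsum : ∑' i, ‖u i‖ ≤ ((4 : ℝ) ^ nseq N k)⁻¹ :=
    (hsum.tsum_le_tsum hu (summable_geometric_two' _)).trans_eq (tsum_geometric_two' _)
  refine ⟨∏' i, (1 + u i), ?_, ?_⟩
  · simpa [u] using (multipliable_one_add_of_summable hsum).hasProd
  · exact (norm_tprod_one_add_sub_one_le hsum).trans (by gcongr)

theorem norm_prod_one_sub_two_mul_sub_one_le (hN : 2 ≤ N) (hR : 2 ≤ R) (hOB : OneBound c N R)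
    {k : ℕ} (hk : 1 ≤ k) {z : ℂ} (hz : 4 * Rseq c N R k ≤ ‖z‖) :
    ‖∏ j ∈ Finset.Icc 1 k, (1 - 2 * ((Rseq c N R j : ℂ) / z) ^ nseq N j) - 1‖ ≤
      Real.exp (2 * (Rseq c N R k)⁻¹ + 2 * ((4 : ℝ) ^ nseq N k)⁻¹) - 1 := by
  have hQ := Finset.norm_prod_one_add_sub_one_le (Finset.Icc 1 k)
    fun j ↦ -(2 * ((Rseq c N R j : ℂ) / z) ^ nseq N j)
  simp only [← sub_eq_add_neg, norm_neg, norm_mul, norm_pow, norm_div, Complex.norm_real,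
    Complex.norm_two, ← Finset.mul_sum] at hQ
  have hsum : ∑ j ∈ Finset.Icc 1 k, (‖Rseq c N R j‖ / ‖z‖) ^ nseq N j ≤
      (Rseq c N R k)⁻¹ + ((4 : ℝ) ^ nseq N k)⁻¹ := by
    rw [Finset.sum_congr rfl (g := fun j ↦ (Rseq c N R j / ‖z‖) ^ nseq N j) fun j hj ↦ by
      rw [Real.norm_of_nonneg (Rseq_pos (by omega) (by linarith) hOB (Finset.mem_Icc.1 hj).1).le]]
    exact sum_Rseq_div_pow_nseq_le hN hR hOB hk hz
  refine hQ.trans ?_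
  gcongr
  linarith

end Estimates

section Factorization

variable {c : ℂ} {N : ℕ} {R : ℝ}

theorem Fseq_eq_mul {j : ℕ} (hj : Rseq c N R j ≠ 0) {z : ℂ} (hz : z ≠ 0) :
    Fseq c N R j z = -(1 / 2) * (z / (Rseq c N R j : ℂ)) ^ nseq N j *
      (1 - 2 * ((Rseq c N R j : ℂ) / z) ^ nseq N j) := by
  have hj' : (Rseq c N R j : ℂ) ≠ 0 := Complex.ofReal_ne_zero.2 hj
  have hinv :
      (z / (Rseq c N R j : ℂ)) ^ nseq N j * ((Rseq c N R j : ℂ) / z) ^ nseq N j = 1 := by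
    rw [← mul_pow, div_mul_div_comm, mul_comm z, div_self (mul_ne_zero hj' hz), one_pow]
  rw [Fseq]
  linear_combination -hinv

theorem pow_mul_prod_eq_neg_Cseq_mul (hN : 1 ≤ N) {k : ℕ} (hk : 1 ≤ k)
    (hR : ∀ j ∈ Finset.Icc 1 k, Rseq c N R j ≠ 0) (z : ℂ) :
    z ^ 2 ^ N * ∏ j ∈ Finset.Icc 1 k, (-(1 / 2) * (z / (Rseq c N R j : ℂ)) ^ nseq N j) =
      -(Cseq c N R k : ℂ) * (z / (Rseq c N R k : ℂ)) ^ (2 * nseq N k) := by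
  obtain ⟨m, rfl⟩ : ∃ m, k = m + 1 := ⟨k - 1, by omega⟩
  have hRk : (Rseq c N R (m + 1) : ℂ) ≠ 0 := Complex.ofReal_ne_zero.2 (hR _ (by simp))
  have hP : ∏ j ∈ Finset.Icc 1 m, (Rseq c N R j : ℂ) ^ nseq N j ≠ 0 :=
    Finset.prod_ne_zero_iff.2 fun j hj ↦ pow_ne_zero _ <| Complex.ofReal_ne_zero.2 <|
      hR j (by simp at hj ⊢; omega)
  have hprod : ∏ j ∈ Finset.Icc 1 (m + 1), (-(1 / 2) * (z / (Rseq c N R j : ℂ)) ^ nseq N j) =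
      (-(1 / 2)) ^ (m + 1) * z ^ (∑ j ∈ Finset.Icc 1 (m + 1), nseq N j) /
        ((∏ j ∈ Finset.Icc 1 m, (Rseq c N R j : ℂ) ^ nseq N j) *
          (Rseq c N R (m + 1) : ℂ) ^ nseq N (m + 1)) := by
    simp only [Finset.prod_mul_distrib, Finset.prod_const, Nat.card_Icc, add_tsub_cancel_right,
      div_pow, Finset.prod_div_distrib, Finset.prod_pow_eq_pow_sum, mul_div_assoc]
    rw [Finset.prod_Icc_succ_top (by omega)]
  rw [hprod, mul_div_assoc', ← mul_assoc, mul_comm (z ^ _), mul_assoc, ← pow_add,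
    two_pow_add_sum_nseq hN, Cseq, add_tsub_cancel_right]
  push_cast
  field_simp
  rw [mul_right_comm, ← mul_pow, div_pow, ← pow_mul, mul_comm 2 (nseq N _), pow_mul]
  field_simp
  ring

theorem fseq_eq_neg_Cseq_mul (hN : 1 ≤ N) {k : ℕ} (hk : 1 ≤ k)
    (hR : ∀ j ∈ Finset.Icc 1 k, Rseq c N R j ≠ 0) {z : ℂ} (hz : z ≠ 0) :
    fseq c N R k z = -(Cseq c N R k : ℂ) * (z / (Rseq c N R k : ℂ)) ^ (2 * nseq N k) *
      (f0iter c N z / z ^ 2 ^ N *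
        ∏ j ∈ Finset.Icc 1 k, (1 - 2 * ((Rseq c N R j : ℂ) / z) ^ nseq N j)) := by
  rw [← pow_mul_prod_eq_neg_Cseq_mul hN hk hR, fseq,
    Finset.prod_congr rfl fun j hj ↦ Fseq_eq_mul (hR j hj) hz, Finset.prod_mul_distrib]
  field_simp

theorem flim_eq_fseq_mul {k : ℕ} {z T : ℂ}
    (hT : HasProd (fun i ↦ Fseq c N R (i + k + 1) z) T) :
    flim c N R z = fseq c N R k z * T := by
  rw [flim, (hT.prod_range_mul (f := fun i ↦ Fseq c N R (i + 1) z)).tprod_eq, fseq, mul_assoc,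
    Finset.range_eq_Ico, Finset.prod_Ico_add' (fun j ↦ Fseq c N R j z), zero_add,
    Finset.Ico_add_one_right_eq_Icc]

end Factorization

/-- There are `R₀ > 0` and `C > 0` (depending only on `c`, `N`) such that for `R ≥ R₀`,
every `k ≥ 1` and `z` with `4R_k ≤ |z| ≤ R_{k+1}/4`,
`f(z) = -C_k (z/R_k)^{2n_k} (1 + δ_k(z))` with `|δ_k(z)| ≤ C (R_k⁻¹ + 4^{-n_k})`. -/
theorem stmt9 (c : ℂ) (N : ℕ) (hN : 10 ≤ N) :
    ∃ R₀ : ℝ, 0 < R₀ ∧ ∃ C : ℝ, 0 < C ∧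
      ∀ R : ℝ, R₀ ≤ R → OneBound c N R →
        ∀ k : ℕ, 1 ≤ k → ∀ z : ℂ,
          4 * Rseq c N R k ≤ ‖z‖ → ‖z‖ ≤ Rseq c N R (k + 1) / 4 →
          ∃ δ : ℂ,
            flim c N R z =
              -((Cseq c N R k : ℂ)) * (z / ((Rseq c N R k : ℝ) : ℂ)) ^ (2 * nseq N k) *
                (1 + δ) ∧
            ‖δ‖ ≤ C * ((Rseq c N R k)⁻¹ + ((4 : ℝ) ^ nseq N k)⁻¹) := by
  obtain ⟨A, hA0, hA⟩ := exists_norm_f0iter_div_pow_sub_one_le c N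
  refine ⟨2 * A + 16, by positivity, A + 6, by positivity, fun R hR hOB k hk z hz hz' ↦ ?_⟩
  have hRk : 2 * A + 16 ≤ Rseq c N R k := hR.trans (le_Rseq (by omega) (by linarith) hOB hk)
  have hz0 : z ≠ 0 := norm_pos_iff.1 (by linarith)
  obtain ⟨T, hT, hT1⟩ := exists_hasProd_Fseq_tail (by omega) (by linarith) hOB hk hz'
  set a := f0iter c N z / z ^ 2 ^ N
  set Q := ∏ j ∈ Finset.Icc 1 k, (1 - 2 * ((Rseq c N R j : ℂ) / z) ^ nseq N j)
  refine ⟨a * Q * T - 1, ?_, ?_⟩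
  · rw [flim_eq_fseq_mul hT, fseq_eq_neg_Cseq_mul (by omega) hk
      (fun j hj ↦ (Rseq_pos (by omega) (by linarith) hOB (Finset.mem_Icc.1 hj).1).ne') hz0]
    ring
  set ε := (Rseq c N R k)⁻¹
  set τ := ((4 : ℝ) ^ nseq N k)⁻¹
  have hε0 : 0 ≤ ε := inv_nonneg.2 (by linarith)
  have hτ0 : 0 ≤ τ := inv_nonneg.2 (by positivity)
  have hτ : τ ≤ 4⁻¹ :=
    inv_anti₀ (by norm_num) (le_self_pow₀ (by norm_num) (Nat.two_pow_pos _).ne')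
  have hAε : (A / 4 + 2) * ε ≤ 1 / 8 := by
    rw [← div_eq_mul_inv, div_le_iff₀ (by linarith)]
    linarith
  have ha1 : ‖a - 1‖ ≤ Real.exp (A / 4 * ε) - 1 := by
    have : A / ‖z‖ ≤ A / 4 * ε :=
      (div_le_div_of_nonneg_left hA0 (by linarith) hz).trans_eq (by ring)
    linarith [hA z (by linarith), Real.add_one_le_exp (A / 4 * ε)]
  have hQ1 := norm_prod_one_sub_two_mul_sub_one_le (by omega) (by linarith) hOB hk hz
  calc ‖a * Q * T - 1‖ ≤ Real.exp (A / 4 * ε + (2 * ε + 2 * τ) + τ) - 1 :=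
        norm_mul_sub_one_le_exp (norm_mul_sub_one_le_exp ha1 hQ1) hT1
    _ ≤ 2 * (A / 4 * ε + (2 * ε + 2 * τ) + τ) :=
        exp_sub_one_le_two_mul (by nlinarith [mul_nonneg hA0 hε0]) (by linarith)
    _ ≤ (A + 6) * (ε + τ) := by nlinarith [mul_nonneg hA0 hε0, mul_nonneg hA0 hτ0]

end
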